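/- Let X be an m×n complex matrix and Y ∈ ℂ^m. If W̃ ∈ ℂ^m is any least square solution of (XX*)W = Y, then X*W̃ is the unique minimum-norm least square solution of XW = Y. -/

import Mathlib

open Matrix

noncomputable def toE {k : ℕ} (v : Fin k → ℂ) : EuclideanSpace ℂ (Fin k) :=
  (WithLp.equiv 2 (Fin k → ℂ)).symm v

/-! Least-squares solutions of `f x = y` are exactly the solutions of the normal equation
`f† (f x - y) = 0`. For the Gram operator `f f†`, which is self-adjoint with
`ker (f f†) = ker f†`, the normal equation of `w` reads `f† (f (f† w) - y) = 0`: so `f† w` is a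
least-squares solution of `f x = y`. All least-squares solutions have the same image under `f`,
hence form the coset `f† w + ker f`, and since `f† w ∈ range f† = (ker f)ᗮ`, Pythagoras makes
`f† w` its unique element of least norm. -/

section LeastSquares

variable {𝕜 E F : Type*} [RCLike 𝕜] [NormedAddCommGroup E] [NormedAddCommGroup F]
  [InnerProductSpace 𝕜 E] [InnerProductSpace 𝕜 F]

def IsLeastSquaresSolution (f : E →ₗ[𝕜] F) (y : F) (x : E) : Prop :=
  ∀ x', ‖f x - y‖ ≤ ‖f x' - y‖

variable [FiniteDimensional 𝕜 E] [FiniteDimensional 𝕜 F] {f : E →ₗ[𝕜] F} {y : F}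

theorem norm_apply_sub_sq_of_adjoint_apply_eq_zero {x : E} (hx : f.adjoint (f x - y) = 0)
    (x' : E) : ‖f x' - y‖ ^ 2 = ‖f x - y‖ ^ 2 + ‖f (x' - x)‖ ^ 2 := by
  have horth : inner 𝕜 (f x - y) (f (x' - x)) = 0 := by
    rw [← LinearMap.adjoint_inner_left, hx, inner_zero_left]
  have hsplit : f x' - y = (f x - y) + f (x' - x) := by rw [map_sub]; abel
  rw [hsplit, norm_add_sq (𝕜 := 𝕜), horth]
  simp

theorem isLeastSquaresSolution_iff_adjoint_apply_eq_zero {x : E} :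
    IsLeastSquaresSolution f y x ↔ f.adjoint (f x - y) = 0 := by
  constructor
  · intro hx
    have hinf : ‖y - f x‖ = ⨅ z : f.range, ‖y - (z : F)‖ := by
      refine le_antisymm (le_ciInf ?_)
        (ciInf_le ⟨0, ?_⟩ (⟨f x, LinearMap.mem_range_self f x⟩ : f.range))
      · rintro ⟨_, x', rfl⟩
        simpa only [norm_sub_rev] using hx x'
      · rintro _ ⟨_, rfl⟩
        exact norm_nonneg _
    have hperp : y - f x ∈ f.adjoint.ker := by
      rw [← LinearMap.orthogonal_range, Submodule.mem_orthogonal']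
      exact (Submodule.norm_eq_iInf_iff_inner_eq_zero _ (LinearMap.mem_range_self f x)).1 hinf
    rw [← neg_sub, map_neg, LinearMap.mem_ker.1 hperp, neg_zero]
  · intro hx x'
    rw [← sq_le_sq₀ (norm_nonneg _) (norm_nonneg _),
      norm_apply_sub_sq_of_adjoint_apply_eq_zero hx x']
    exact le_add_of_nonneg_right (sq_nonneg _)

theorem IsLeastSquaresSolution.apply_eq {x x' : E} (hx : IsLeastSquaresSolution f y x)
    (hx' : IsLeastSquaresSolution f y x') : f x = f x' := by
  rw [isLeastSquaresSolution_iff_adjoint_apply_eq_zero] at hx hx'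
  have hker : x - x' ∈ (f.adjoint ∘ₗ f).ker := by
    rw [LinearMap.mem_ker, LinearMap.comp_apply, map_sub f,
      show f x - f x' = (f x - y) - (f x' - y) by abel, map_sub, hx, hx', sub_zero]
  rw [LinearMap.ker_adjoint_comp_self, LinearMap.mem_ker, map_sub, sub_eq_zero] at hker
  exact hker

theorem isLeastSquaresSolution_adjoint_apply_of_comp_adjoint {w : F}
    (hw : IsLeastSquaresSolution (f ∘ₗ f.adjoint) y w) :
    IsLeastSquaresSolution f y (f.adjoint w) := by
  rw [isLeastSquaresSolution_iff_adjoint_apply_eq_zero, LinearMap.adjoint_comp,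
    LinearMap.adjoint_adjoint, ← LinearMap.mem_ker, LinearMap.ker_self_comp_adjoint] at hw
  exact isLeastSquaresSolution_iff_adjoint_apply_eq_zero.2 hw

theorem IsLeastSquaresSolution.norm_sq_eq_of_mem_range_adjoint {a x : E}
    (ha : IsLeastSquaresSolution f y a) (ha_range : a ∈ LinearMap.range f.adjoint)
    (hx : IsLeastSquaresSolution f y x) : ‖x‖ ^ 2 = ‖a‖ ^ 2 + ‖x - a‖ ^ 2 := by
  obtain ⟨w, rfl⟩ := ha_range
  have horth : inner 𝕜 (f.adjoint w) (x - f.adjoint w) = 0 := by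
    rw [LinearMap.adjoint_inner_left, map_sub, hx.apply_eq ha, sub_self, inner_zero_right]
  simpa [horth] using norm_add_sq (𝕜 := 𝕜) (f.adjoint w) (x - f.adjoint w)

theorem IsLeastSquaresSolution.norm_le_of_mem_range_adjoint {a x : E}
    (ha : IsLeastSquaresSolution f y a) (ha_range : a ∈ LinearMap.range f.adjoint)
    (hx : IsLeastSquaresSolution f y x) : ‖a‖ ≤ ‖x‖ := by
  rw [← sq_le_sq₀ (norm_nonneg _) (norm_nonneg _), ha.norm_sq_eq_of_mem_range_adjoint ha_range hx]
  exact le_add_of_nonneg_right (sq_nonneg _)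

theorem IsLeastSquaresSolution.eq_of_mem_range_adjoint_of_norm_le {a x : E}
    (ha : IsLeastSquaresSolution f y a) (ha_range : a ∈ LinearMap.range f.adjoint)
    (hx : IsLeastSquaresSolution f y x) (hle : ‖x‖ ≤ ‖a‖) : x = a := by
  have hsq := ha.norm_sq_eq_of_mem_range_adjoint ha_range hx
  have hle_sq := pow_le_pow_left₀ (norm_nonneg _) hle 2
  have hzero : ‖x - a‖ ^ 2 = 0 := by nlinarith [sq_nonneg ‖x - a‖]
  rwa [sq_eq_zero_iff, norm_eq_zero, sub_eq_zero] at hzero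

end LeastSquares

theorem isLeastSquaresSolution_toEuclideanLin_iff {k l : ℕ} (M : Matrix (Fin k) (Fin l) ℂ)
    (Y : Fin k → ℂ) (W : Fin l → ℂ) :
    IsLeastSquaresSolution M.toEuclideanLin (toE Y) (toE W) ↔
      ∀ W' : Fin l → ℂ, ‖toE (M *ᵥ W - Y)‖ ≤ ‖toE (M *ᵥ W' - Y)‖ :=
  (WithLp.equiv 2 (Fin l → ℂ)).symm.forall_congr_right.symm

theorem toE_conjTranspose_mulVec {k l : ℕ} (M : Matrix (Fin k) (Fin l) ℂ) (v : Fin k → ℂ) :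
    toE (Mᴴ *ᵥ v) = M.toEuclideanLin.adjoint (toE v) := by
  rw [← Matrix.toEuclideanLin_conjTranspose_eq_adjoint]
  rfl

theorem toEuclideanLin_mul_conjTranspose {𝕜 ι κ : Type*} [RCLike 𝕜] [Fintype ι] [DecidableEq ι]
    [Fintype κ] [DecidableEq κ] (M : Matrix ι κ 𝕜) :
    (M * Mᴴ).toEuclideanLin = M.toEuclideanLin ∘ₗ M.toEuclideanLin.adjoint := by
  ext1 v
  simp [← Matrix.toEuclideanLin_conjTranspose_eq_adjoint]

theorem stmt12 {m n : ℕ} (X : Matrix (Fin m) (Fin n) ℂ) (Y : Fin m → ℂ)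
    (Wt : Fin m → ℂ)
    (h : ∀ W : Fin m → ℂ,
      ‖toE ((X * Xᴴ).mulVec Wt - Y)‖ ≤ ‖toE ((X * Xᴴ).mulVec W - Y)‖) :
    (∀ W : Fin n → ℂ,
        ‖toE (X.mulVec (Xᴴ.mulVec Wt) - Y)‖ ≤ ‖toE (X.mulVec W - Y)‖) ∧
      (∀ W : Fin n → ℂ,
        (∀ W' : Fin n → ℂ, ‖toE (X.mulVec W - Y)‖ ≤ ‖toE (X.mulVec W' - Y)‖) →
        ‖toE (Xᴴ.mulVec Wt)‖ ≤ ‖toE W‖) ∧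
      (∀ W : Fin n → ℂ,
        (∀ W' : Fin n → ℂ, ‖toE (X.mulVec W - Y)‖ ≤ ‖toE (X.mulVec W' - Y)‖) →
        ‖toE W‖ ≤ ‖toE (Xᴴ.mulVec Wt)‖ → W = Xᴴ.mulVec Wt) := by
  set f := X.toEuclideanLin
  have hgram : IsLeastSquaresSolution (f ∘ₗ f.adjoint) (toE Y) (toE Wt) := by
    rw [← toEuclideanLin_mul_conjTranspose]
    exact (isLeastSquaresSolution_toEuclideanLin_iff _ Y Wt).2 h
  have hsol : IsLeastSquaresSolution f (toE Y) (toE (Xᴴ *ᵥ Wt)) := by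
    rw [toE_conjTranspose_mulVec]
    exact isLeastSquaresSolution_adjoint_apply_of_comp_adjoint hgram
  have hrange : toE (Xᴴ *ᵥ Wt) ∈ LinearMap.range f.adjoint :=
    ⟨toE Wt, (toE_conjTranspose_mulVec X Wt).symm⟩
  have hlsq (W : Fin n → ℂ) := (isLeastSquaresSolution_toEuclideanLin_iff X Y W).2
  refine ⟨(isLeastSquaresSolution_toEuclideanLin_iff X Y _).1 hsol,
    fun W hW => hsol.norm_le_of_mem_range_adjoint hrange (hlsq W hW), fun W hW hle => ?_⟩
  exact (WithLp.equiv 2 (Fin n → ℂ)).symm.injective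
    (hsol.eq_of_mem_range_adjoint_of_norm_le hrange (hlsq W hW) hle)
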